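/- Let ℓ ≥ 3 be an integer and let G_{2,ℓ} be the graph described in the context. Then for every choice of vertices x_i ∈ {t_{i,1}, t_{i,2}} for i = 2,…,ℓ−1, the set {t_{1,1}, v, x_2,…,x_{ℓ−1}} is a total dominating set of G_{2,ℓ} of cardinality ℓ. -/

import Mathlib

/-- Vertices of `G_{2,ℓ}`: triangle vertices `t_{i,j}` as `Sum.inl (i,j)`
(0-indexed), and `u = Sum.inr false`, `v = Sum.inr true`. -/
abbrev G2lV (l : ℕ) := (Fin (l - 1) × Fin 3) ⊕ Bool

/-- Edge relation of `G_{2,ℓ}`: triangles on each `t_{i,·}`; the edge `uv`;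
`u` and `v` adjacent to `t_{1,1}` (0-indexed `(0,0)`); `u` adjacent to all
`t_{i,j}` with `i ≥ 2` (0-indexed `i.val ≥ 1`); `v` adjacent to `t_{i,1}`,
`t_{i,2}` (0-indexed `j ∈ {0,1}`) for `i ≥ 2`. -/
def G2lRel (l : ℕ) : G2lV l → G2lV l → Prop
  | .inl p, .inl q => p.1 = q.1
  | .inr false, .inl p => (p.1.val = 0 ∧ p.2.val = 0) ∨ 1 ≤ p.1.val
  | .inr true, .inl p =>
      (p.1.val = 0 ∧ p.2.val = 0) ∨ (1 ≤ p.1.val ∧ (p.2.val = 0 ∨ p.2.val = 1))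
  | .inr false, .inr true => True
  | _, _ => False

/-- The graph `G_{2,ℓ}`. -/
def G2l (l : ℕ) : SimpleGraph (G2lV l) := SimpleGraph.fromRel (G2lRel l)

/-- `D` is a total dominating set of `G`. -/
def IsTotalDomSet {V : Type*} (G : SimpleGraph V) (D : Finset V) : Prop :=
  ∀ v : V, ∃ d ∈ D, G.Adj v d

open Finset

lemma Fin.card_filter_one_le_val (n : ℕ) : #{i : Fin n | 1 ≤ i.val} = n - 1 := by
  have h := card_filter_add_card_filter_not (s := (univ : Finset (Fin n)))
    (fun i : Fin n => 1 ≤ i.val)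
  simp only [not_le, Fin.card_filter_val_lt, card_univ, Fintype.card_fin] at h
  omega

namespace G2l

variable {l : ℕ}

lemma adj_inl_inl {p q : Fin (l - 1) × Fin 3} :
    (G2l l).Adj (.inl p) (.inl q) ↔ p ≠ q ∧ p.1 = q.1 := by
  simp [G2l, G2lRel, eq_comm]

lemma adj_inr_false_inr_true : (G2l l).Adj (.inr false) (.inr true) := by
  simp [G2l, G2lRel]

lemma adj_inr_true_inl {p : Fin (l - 1) × Fin 3} :
    (G2l l).Adj (.inr true) (.inl p) ↔
      (p.1.val = 0 ∧ p.2.val = 0) ∨ (1 ≤ p.1.val ∧ (p.2.val = 0 ∨ p.2.val = 1)) := by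
  simp [G2l, G2lRel]

def domSet (z : Fin (l - 1)) (c : Fin (l - 1) → Fin 3) : Finset (G2lV l) :=
  insert (.inl (z, 0)) (insert (.inr true) (image (fun i => .inl (i, c i)) {i | 1 ≤ i.val}))

/-- `t_{1,1}` and `v` dominate each other and `u`, and `t_{1,1}` dominates its triangle; in a
triangle `i ≥ 2` the chosen vertex `x_i` dominates the other two, and `v` dominates `x_i`. -/
lemma isTotalDomSet_domSet {z : Fin (l - 1)} (hz : z.val = 0) {c : Fin (l - 1) → Fin 3}
    (hc : ∀ i, 1 ≤ i.val → (c i).val = 0 ∨ (c i).val = 1) :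
    IsTotalDomSet (G2l l) (domSet z c) := by
  have hv : .inr true ∈ domSet z c := by simp [domSet]
  have ht : .inl (z, 0) ∈ domSet z c := by simp [domSet]
  rintro (⟨i, j⟩ | _ | _)
  · obtain hi | hi : i.val = 0 ∨ 1 ≤ i.val := by omega
    · obtain rfl : i = z := Fin.ext (hi.trans hz.symm)
      by_cases hj : j = 0
      · subst hj
        exact ⟨_, hv, (adj_inr_true_inl.2 (.inl ⟨hz, rfl⟩)).symm⟩
      · exact ⟨_, ht, adj_inl_inl.2 ⟨by simp [hj], rfl⟩⟩
    · by_cases hj : j = c i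
      · subst hj
        exact ⟨_, hv, (adj_inr_true_inl.2 (.inr ⟨hi, hc i hi⟩)).symm⟩
      · refine ⟨.inl (i, c i), ?_, adj_inl_inl.2 ⟨by simp [hj], rfl⟩⟩
        simp [domSet, hi]
  · exact ⟨_, hv, adj_inr_false_inr_true⟩
  · exact ⟨_, ht, adj_inr_true_inl.2 (.inl ⟨hz, rfl⟩)⟩

lemma card_domSet {z : Fin (l - 1)} (hz : z.val = 0) (c : Fin (l - 1) → Fin 3) :
    #(domSet z c) = l := by
  have hl : 2 ≤ l := by have := z.isLt; omega
  have hinj : Function.Injective (fun i => (.inl (i, c i) : G2lV l)) := fun _ _ h =>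
    congrArg Prod.fst (Sum.inl_injective h)
  rw [domSet, card_insert_of_notMem (by simp [hz]), card_insert_of_notMem (by simp),
    card_image_of_injective _ hinj, Fin.card_filter_one_le_val]
  omega

end G2l

/-- For every choice `x_i ∈ {t_{i,1}, t_{i,2}}` for `i = 2, …, ℓ-1` (0-indexed
`1 ≤ i.val`), the set `{t_{1,1}, v, x_2, …, x_{ℓ-1}}` is a total dominating
set of `G_{2,ℓ}` of cardinality `ℓ`. -/
theorem stmt8 (l : ℕ) (hl : 3 ≤ l)
    (c : Fin (l - 1) → Fin 3) (hc : ∀ i, 1 ≤ i.val → (c i).val = 0 ∨ (c i).val = 1)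
    (D : Finset (G2lV l))
    (hDdef : D = insert (Sum.inl ((⟨0, by omega⟩ : Fin (l - 1)), 0))
        (insert (Sum.inr true)
          (Finset.image (fun i => Sum.inl (i, c i))
            (Finset.univ.filter (fun i : Fin (l - 1) => 1 ≤ i.val))))) :
    IsTotalDomSet (G2l l) D ∧ D.card = l := by
  subst hDdef
  exact ⟨G2l.isTotalDomSet_domSet rfl hc, G2l.card_domSet rfl c⟩
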